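/- For all finite words ω, ω̄ ∈ Ω_1, one has ω <_{Ω_1} ω̄ if and only if 2^{s(ω)−1} + n_ω < 2^{s(ω̄)−1} + n_{ω̄}. -/

import Mathlib

/-- To a finite word `ω = (w₁, …, w_j)` (a list, head = `w₁`) associate the
nonnegative integer `n_ω` whose binary expansion is the concatenation of the
blocks `b̂_{w_j−1} b̂_{w_{j−1}−1} ⋯ b̂_{w_1−1}`, where `b̂_k` is a `0` followed
by `k` ones.  Appending the block `b̂_k` on the right of a numeral of value `v`
yields `v * 2^(k+1) + (2^k − 1)`. -/
def wordVal (ω : List ℕ) : ℕ :=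
  ω.reverse.foldl (fun v w => v * 2 ^ w + (2 ^ (w - 1) - 1)) 0

/-- The reverse lexicographic order `<_{Ω₁}` on finite words: first compare the
sums of the letters; for equal sums, compare the letters from the right,
lexicographically at the first position (from the right) where they differ. -/
def revLexLt (a b : List ℕ) : Prop :=
  a.sum < b.sum ∨
    (a.sum = b.sum ∧ ∃ t : ℕ, t < a.length ∧ t < b.length ∧
      a.reverse.take t = b.reverse.take t ∧ a.reverse.getD t 0 < b.reverse.getD t 0)

/-!
Reading a word from its last letter, `2^{s-1} + n_ω` is the binary numeral `1 b̂_{w_j-1} ⋯ b̂_{w_1-1}`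
of `s` digits (the leading `0` of the first block becomes a `1`), so words of smaller sum give
numerals with fewer digits. For equal sums, at the first letter (from the right) where `ω` and
`ω̄` differ, the smaller letter closes its block with a `0` earlier, at a position where the other
numeral still has a `1`; everything further right only changes lower digits.
-/

/-- Appending the block `b̂_{w-1}` to the right of a numeral of value `v`. -/
def appendBlock (v w : ℕ) : ℕ :=
  v * 2 ^ w + (2 ^ (w - 1) - 1)

/-- The numeral `b̂_{m₁-1} b̂_{m₂-1} ⋯`, blocks in list order. -/
def blocksVal (m : List ℕ) : ℕ :=
  m.foldl appendBlock 0

/-- `m` is below `m'` at the first position where they differ, and that position lies in both. -/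
def FirstDiffLt (m m' : List ℕ) : Prop :=
  ∃ t : ℕ, t < m.length ∧ t < m'.length ∧ m.take t = m'.take t ∧ m.getD t 0 < m'.getD t 0

theorem wordVal_eq_blocksVal_reverse (ω : List ℕ) : wordVal ω = blocksVal ω.reverse :=
  rfl

theorem foldl_appendBlock (m : List ℕ) (v : ℕ) :
    m.foldl appendBlock v = v * 2 ^ m.sum + blocksVal m := by
  induction m generalizing v with
  | nil => simp [blocksVal]
  | cons w m ih =>
    simp only [blocksVal, List.foldl_cons, List.sum_cons] at ih ⊢
    rw [ih, ih (appendBlock 0 w)]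
    simp only [appendBlock, pow_add]
    ring

theorem blocksVal_cons_add_two_pow (w : ℕ) (r : List ℕ) :
    blocksVal (w :: r) + 2 ^ r.sum = 2 ^ (w - 1 + r.sum) + blocksVal r := by
  have hcons : blocksVal (w :: r) = (2 ^ (w - 1) - 1) * 2 ^ r.sum + blocksVal r := by
    rw [blocksVal, List.foldl_cons, foldl_appendBlock]
    simp [appendBlock]
  obtain ⟨p, hp⟩ : ∃ p, 2 ^ (w - 1) = p + 1 := ⟨_, (Nat.succ_pred_eq_of_pos (by positivity)).symm⟩
  rw [hcons, pow_add, hp, Nat.add_sub_cancel]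
  ring

theorem blocksVal_lt_two_pow {m : List ℕ} (hm : ∀ x ∈ m, 1 ≤ x) :
    blocksVal m < 2 ^ (m.sum - 1) := by
  induction m with
  | nil => simp [blocksVal]
  | cons w r ih =>
    have hw : 1 ≤ w := hm w List.mem_cons_self
    have hr : blocksVal r < 2 ^ r.sum :=
      (ih fun x hx => hm x (List.mem_cons_of_mem w hx)).trans_le
        (Nat.pow_le_pow_right two_pos (Nat.sub_le _ _))
    have hsum : w - 1 + r.sum = (w :: r).sum - 1 := by simp only [List.sum_cons]; omega
    have := blocksVal_cons_add_two_pow w r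
    rw [hsum] at this
    omega

/-- For equal sums, the tail after the smaller letter has the larger sum, hence also room for the
larger tail value. -/
theorem blocksVal_cons_lt_cons {w w' : ℕ} {r r' : List ℕ} (hw : 1 ≤ w) (hr : ∀ x ∈ r, 1 ≤ x)
    (hlt : w < w') (hsum : w + r.sum = w' + r'.sum) :
    blocksVal (w :: r) < blocksVal (w' :: r') := by
  have hcons := blocksVal_cons_add_two_pow w r
  have hcons' := blocksVal_cons_add_two_pow w' r'
  have hexp : w' - 1 + r'.sum = w - 1 + r.sum := by omega
  rw [hexp] at hcons'
  have htail := blocksVal_lt_two_pow hr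
  have hpow : 2 ^ r'.sum ≤ 2 ^ (r.sum - 1) := Nat.pow_le_pow_right two_pos (by omega)
  have hdouble : 2 ^ r.sum = 2 * 2 ^ (r.sum - 1) := by
    rw [← pow_succ']; congr 1; omega
  omega

theorem firstDiffLt_nil_left (m : List ℕ) : ¬ FirstDiffLt [] m := by
  simp [FirstDiffLt]

theorem firstDiffLt_cons_cons (x y : ℕ) (m m' : List ℕ) :
    FirstDiffLt (x :: m) (y :: m') ↔ x < y ∨ x = y ∧ FirstDiffLt m m' := by
  constructor
  · rintro ⟨_ | t, hlen, hlen', htake, hget⟩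
    · simpa using Or.inl hget
    · simp only [List.take_succ_cons, List.cons.injEq] at htake
      exact Or.inr ⟨htake.1, t, by simpa using hlen, by simpa using hlen', htake.2, by simpa using hget⟩
  · rintro (hlt | ⟨rfl, t, hlen, hlen', htake, hget⟩)
    · exact ⟨0, by simp, by simp, rfl, by simpa using hlt⟩
    · exact ⟨t + 1, by simpa using hlen, by simpa using hlen', by simp [htake], by simpa using hget⟩

theorem blocksVal_lt_blocksVal_iff {m m' : List ℕ} (hm : ∀ x ∈ m, 1 ≤ x) (hm' : ∀ x ∈ m', 1 ≤ x)
    (hsum : m.sum = m'.sum) : blocksVal m < blocksVal m' ↔ FirstDiffLt m m' := by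
  induction m generalizing m' with
  | nil =>
    cases m' with
    | nil => simp [blocksVal, firstDiffLt_nil_left]
    | cons y r' =>
      have := hm' y List.mem_cons_self
      simp only [List.sum_nil, List.sum_cons] at hsum
      omega
  | cons x r ih =>
    cases m' with
    | nil =>
      have := hm x List.mem_cons_self
      simp only [List.sum_nil, List.sum_cons] at hsum
      omega
    | cons y r' =>
      have hx : 1 ≤ x := hm x List.mem_cons_self
      have hy : 1 ≤ y := hm' y List.mem_cons_self
      have hr : ∀ z ∈ r, 1 ≤ z := fun z hz => hm z (List.mem_cons_of_mem x hz)
      have hr' : ∀ z ∈ r', 1 ≤ z := fun z hz => hm' z (List.mem_cons_of_mem y hz)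
      simp only [List.sum_cons] at hsum
      rw [firstDiffLt_cons_cons]
      rcases lt_trichotomy x y with hxy | rfl | hyx
      · exact iff_of_true (blocksVal_cons_lt_cons hx hr hxy hsum) (Or.inl hxy)
      · have hcons := blocksVal_cons_add_two_pow x r
        have hcons' := blocksVal_cons_add_two_pow x r'
        have htail : r.sum = r'.sum := by omega
        rw [htail] at hcons
        rw [← ih hr hr' htail]
        omega
      · refine iff_of_false (blocksVal_cons_lt_cons hy hr' hyx hsum.symm).not_gt ?_
        rintro (hxy | ⟨rfl, -⟩) <;> omega

theorem revLexLt_iff_firstDiffLt_reverse {a b : List ℕ} (hsum : a.sum = b.sum) :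
    revLexLt a b ↔ FirstDiffLt a.reverse b.reverse := by
  simp [revLexLt, FirstDiffLt, hsum]

theorem two_pow_pred_add_lt {s s' v v' : ℕ} (hs : 1 ≤ s) (hlt : s < s') (hv : v < 2 ^ (s - 1)) :
    2 ^ (s - 1) + v < 2 ^ (s' - 1) + v' := by
  have hdouble : 2 ^ s = 2 * 2 ^ (s - 1) := by
    rw [← pow_succ']; congr 1; omega
  have hpow : 2 ^ s ≤ 2 ^ (s' - 1) := Nat.pow_le_pow_right two_pos (by omega)
  omega

theorem one_le_sum_of_ne_nil {m : List ℕ} (hne : m ≠ []) (hm : ∀ x ∈ m, 1 ≤ x) : 1 ≤ m.sum := by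
  obtain ⟨x, r, rfl⟩ := List.exists_cons_of_ne_nil hne
  simpa using Nat.le_add_right_of_le (hm x List.mem_cons_self)

theorem revLexLt_iff_val_lt (a b : List ℕ)
    (ha : a ≠ [] ∧ ∀ x ∈ a, 1 ≤ x) (hb : b ≠ [] ∧ ∀ x ∈ b, 1 ≤ x) :
    revLexLt a b ↔
      2 ^ (a.sum - 1) + wordVal a < 2 ^ (b.sum - 1) + wordVal b := by
  have hpos {m : List ℕ} (hm : ∀ x ∈ m, 1 ≤ x) : ∀ x ∈ m.reverse, 1 ≤ x := by simpa using hm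
  have hwordVal {m : List ℕ} (hm : ∀ x ∈ m, 1 ≤ x) : wordVal m < 2 ^ (m.sum - 1) := by
    simpa [wordVal_eq_blocksVal_reverse] using blocksVal_lt_two_pow (hpos hm)
  rcases lt_trichotomy a.sum b.sum with hlt | heq | hgt
  · exact iff_of_true (Or.inl hlt)
      (two_pow_pred_add_lt (one_le_sum_of_ne_nil ha.1 ha.2) hlt (hwordVal ha.2))
  · rw [revLexLt_iff_firstDiffLt_reverse heq, heq, add_lt_add_iff_left]
    exact (blocksVal_lt_blocksVal_iff (hpos ha.2) (hpos hb.2) (by simpa using heq)).symm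
  · refine iff_of_false (by rintro (h | ⟨h, -⟩) <;> omega) (not_lt.2 ?_)
    exact (two_pow_pred_add_lt (one_le_sum_of_ne_nil hb.1 hb.2) hgt (hwordVal hb.2)).le
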